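/- arXiv:1109.2503 — 2 statements merged into one kernel-verified Lean document; each statement's English description precedes it below -/
import Mathlib

section
/- Let n ∈ ℕ and let q : ℕ → ℍ, with derived polynomials f₁, f₂ and discriminant polynomial p̃ = f₁·f̄₁ + f₂·f̄₂. Then for every real number t, the value p̃(t) is the real number |f₁(t)|² + |f₂(t)|², which equals the squared norm (normSq) of the quaternion p(t) = ∑_{m=0}^{n} (q m)·((t : ℍ))^m. In particular p̃(t) ≥ 0 for all real t, and p̃(t) = 0 if and only if the real quaternion t is a zero of p. -/
noncomputable section

/-- The quaternion `a + b·i` corresponding to the complex number `z = a + b·I`. -/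
def cq (z : ℂ) : Quaternion ℝ := ⟨z.re, z.im, 0, 0⟩

/-- The quaternion imaginary unit `k`. -/
def qk : Quaternion ℝ := ⟨0, 0, 0, 1⟩

/-- Evaluation of the first derived polynomial `f₁(t) = ∑ t₁⁽ᵐ⁾ tᵐ`,
where `q m = t₁⁽ᵐ⁾ + t₂⁽ᵐ⁾·j` and `t₁⁽ᵐ⁾ = (q m).re + (q m).imI·I`. -/
def f1 (n : ℕ) (q : ℕ → Quaternion ℝ) (z : ℂ) : ℂ :=
  ∑ m ∈ Finset.range (n + 1), (⟨(q m).re, (q m).imI⟩ : ℂ) * z ^ m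

/-- Evaluation of the second derived polynomial `f₂(t) = ∑ t₂⁽ᵐ⁾ tᵐ`,
where `t₂⁽ᵐ⁾ = (q m).imJ + (q m).imK·I`. -/
def f2 (n : ℕ) (q : ℕ → Quaternion ℝ) (z : ℂ) : ℂ :=
  ∑ m ∈ Finset.range (n + 1), (⟨(q m).imJ, (q m).imK⟩ : ℂ) * z ^ m

/-- Evaluation of `f̄₁`, obtained from `f₁` by conjugating each coefficient. -/
def f1b (n : ℕ) (q : ℕ → Quaternion ℝ) (z : ℂ) : ℂ :=
  ∑ m ∈ Finset.range (n + 1), (starRingEnd ℂ) (⟨(q m).re, (q m).imI⟩ : ℂ) * z ^ m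

/-- Evaluation of `f̄₂`, obtained from `f₂` by conjugating each coefficient. -/
def f2b (n : ℕ) (q : ℕ → Quaternion ℝ) (z : ℂ) : ℂ :=
  ∑ m ∈ Finset.range (n + 1), (starRingEnd ℂ) (⟨(q m).imJ, (q m).imK⟩ : ℂ) * z ^ m

/-- Evaluation of the discriminant polynomial `p̃ = f₁·f̄₁ + f₂·f̄₂`. -/
def ptilde (n : ℕ) (q : ℕ → Quaternion ℝ) (z : ℂ) : ℂ :=
  f1 n q z * f1b n q z + f2 n q z * f2b n q z


/-!
For real `t` the powers `(t : ℍ) ^ m` are central, so `p(t) = ∑ t ^ m • q m` and its two complex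
components in `ℍ = ℂ ⊕ ℂ·j` are exactly `f₁(t)` and `f₂(t)`; hence `normSq (p t) = |f₁(t)|² + |f₂(t)|²`.
Since `f̄ᵢ` has conjugated coefficients and `t` is real, `f̄ᵢ(t)` is the conjugate of `fᵢ(t)`, so
`p̃(t) = f₁(t)·conj f₁(t) + f₂(t)·conj f₂(t)` is that same real number.
-/

open Finset

namespace Quaternion

/-- The component `t₁ = x.re + x.imI·I` of `x = t₁ + t₂·j`. -/
@[simps]
def toComplexFst : ℍ[ℝ] →ₗ[ℝ] ℂ where
  toFun x := ⟨x.re, x.imI⟩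
  map_add' _ _ := rfl
  map_smul' _ _ := by apply Complex.ext <;> simp

/-- The component `t₂ = x.imJ + x.imK·I` of `x = t₁ + t₂·j`. -/
@[simps]
def toComplexSnd : ℍ[ℝ] →ₗ[ℝ] ℂ where
  toFun x := ⟨x.imJ, x.imK⟩
  map_add' _ _ := rfl
  map_smul' _ _ := by apply Complex.ext <;> simp

theorem normSq_eq_normSq_toComplexFst_add_normSq_toComplexSnd (x : ℍ[ℝ]) :
    normSq x = Complex.normSq (toComplexFst x) + Complex.normSq (toComplexSnd x) := by
  simp only [normSq_def', Complex.normSq_apply, toComplexFst_apply_re, toComplexFst_apply_im,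
    toComplexSnd_apply_re, toComplexSnd_apply_im]
  ring

theorem sum_mul_coe_pow {R : Type*} [CommRing R] (c : ℕ → ℍ[R]) (s : Finset ℕ) (t : R) :
    ∑ m ∈ s, c m * (t : ℍ[R]) ^ m = ∑ m ∈ s, t ^ m • c m := by
  simp only [← coe_pow, mul_coe_eq_smul]

end Quaternion

open Quaternion

section RealArgument

variable (n : ℕ) (q : ℕ → ℍ[ℝ]) (t : ℝ)

theorem f1_ofReal :
    f1 n q t = toComplexFst (∑ m ∈ range (n + 1), q m * (t : ℍ[ℝ]) ^ m) := by
  rw [sum_mul_coe_pow, map_sum, f1]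
  refine sum_congr rfl fun m _ => ?_
  rw [map_smul, ← Complex.ofReal_pow, Complex.real_smul, mul_comm]
  rfl

theorem f2_ofReal :
    f2 n q t = toComplexSnd (∑ m ∈ range (n + 1), q m * (t : ℍ[ℝ]) ^ m) := by
  rw [sum_mul_coe_pow, map_sum, f2]
  refine sum_congr rfl fun m _ => ?_
  rw [map_smul, ← Complex.ofReal_pow, Complex.real_smul, mul_comm]
  rfl

theorem f1b_ofReal : f1b n q t = starRingEnd ℂ (f1 n q t) := by
  simp [f1, f1b, Complex.conj_ofReal]

theorem f2b_ofReal : f2b n q t = starRingEnd ℂ (f2 n q t) := by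
  simp [f2, f2b, Complex.conj_ofReal]

theorem ptilde_ofReal :
    ptilde n q t = ((‖f1 n q t‖ ^ 2 + ‖f2 n q t‖ ^ 2 : ℝ) : ℂ) := by
  rw [ptilde, f1b_ofReal, f2b_ofReal, Complex.mul_conj, Complex.mul_conj]
  push_cast [Complex.sq_norm]
  rfl

theorem sq_norm_f1_add_sq_norm_f2_ofReal :
    ‖f1 n q t‖ ^ 2 + ‖f2 n q t‖ ^ 2 =
      normSq (∑ m ∈ range (n + 1), q m * (t : ℍ[ℝ]) ^ m) := by
  rw [normSq_eq_normSq_toComplexFst_add_normSq_toComplexSnd, ← f1_ofReal, ← f2_ofReal,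
    Complex.sq_norm, Complex.sq_norm]

end RealArgument

/-- For every real `t`, the value `p̃(t)` of the discriminant polynomial is the real number
`|f₁(t)|² + |f₂(t)|²`, which equals `normSq` of the quaternion `p(t)`.  In particular
`p̃(t) ≥ 0` for real `t`, and `p̃(t) = 0` iff the real quaternion `t` is a zero of `p`. -/
theorem discriminant_at_real_values
    (n : ℕ) (q : ℕ → Quaternion ℝ) (t : ℝ) :
    ptilde n q (t : ℂ) =
        ((‖f1 n q (t : ℂ)‖ ^ 2 + ‖f2 n q (t : ℂ)‖ ^ 2 : ℝ) : ℂ) ∧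
      ‖f1 n q (t : ℂ)‖ ^ 2 + ‖f2 n q (t : ℂ)‖ ^ 2 =
        Quaternion.normSq (∑ m ∈ Finset.range (n + 1), q m * ((t : Quaternion ℝ)) ^ m) ∧
      0 ≤ (ptilde n q (t : ℂ)).re ∧
      (ptilde n q (t : ℂ) = 0 ↔
        ∑ m ∈ Finset.range (n + 1), q m * ((t : Quaternion ℝ)) ^ m = 0) := by
  have hnormSq := sq_norm_f1_add_sq_norm_f2_ofReal n q t
  refine ⟨ptilde_ofReal n q t, hnormSq, ?_, ?_⟩
  · rw [ptilde_ofReal, Complex.ofReal_re, hnormSq]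
    exact normSq_nonneg
  · rw [ptilde_ofReal, hnormSq, Complex.ofReal_eq_zero, normSq_eq_zero]
end
end

section
/- Let n ∈ ℕ and let q : ℕ → ℍ with constant coefficient q 0 = 0 or q 0 = 1, with derived polynomials f₁, f₂ and discriminant polynomial p̃ = f₁·f̄₁ + f₂·f̄₂. Suppose η ∈ ℂ is nonreal (Im η ≠ 0), p̃(η) = 0, and D' := |f₁(conj η)|² + |f₂(conj η)|² ≠ 0. Then the quaternion ω = (1/D')·( |f₁(conj η)|²·η + |f₂(conj η)|²·(conj η) + 2·(Im η)·( f₂(conj η)·conj(f₁(conj η)) )·k ) — where each complex number w is identified with the quaternion w.re + w.im·i and all products are taken in ℍ — is a zero of p, i.e., ∑_{m=0}^{n} (q m)·ω^m = 0. -/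
noncomputable section

/-- The isolated zero `ω` associated to a nonreal root `η` of the discriminant polynomial,
in the case `D = |f₁(η)|² + |f₂(η)|² ≠ 0`:
`ω = (1/D)·(|f₂(η)|²·η + |f₁(η)|²·(conj η) − 2·(Im η)·(f₂(η)·conj(f₁(η)))·k)`. -/
def omega1 (n : ℕ) (q : ℕ → Quaternion ℝ) (η : ℂ) : Quaternion ℝ :=
  (((‖f1 n q η‖ ^ 2 + ‖f2 n q η‖ ^ 2)⁻¹ : ℝ) : Quaternion ℝ) *
    (((‖f2 n q η‖ ^ 2 : ℝ) : Quaternion ℝ) * cq η +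
     ((‖f1 n q η‖ ^ 2 : ℝ) : Quaternion ℝ) * cq ((starRingEnd ℂ) η) -
     ((2 * η.im : ℝ) : Quaternion ℝ) *
       (cq (f2 n q η * (starRingEnd ℂ) (f1 n q η)) * qk))

/-- The isolated zero `ω` associated to a nonreal root `η` of the discriminant polynomial,
in the case `D' = |f₁(conj η)|² + |f₂(conj η)|² ≠ 0`:
`ω = (1/D')·(|f₁(conj η)|²·η + |f₂(conj η)|²·(conj η) + 2·(Im η)·(f₂(conj η)·conj(f₁(conj η)))·k)`. -/
def omega2 (n : ℕ) (q : ℕ → Quaternion ℝ) (η : ℂ) : Quaternion ℝ :=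
  (((‖f1 n q ((starRingEnd ℂ) η)‖ ^ 2 +
      ‖f2 n q ((starRingEnd ℂ) η)‖ ^ 2)⁻¹ : ℝ) : Quaternion ℝ) *
    (((‖f1 n q ((starRingEnd ℂ) η)‖ ^ 2 : ℝ) : Quaternion ℝ) * cq η +
     ((‖f2 n q ((starRingEnd ℂ) η)‖ ^ 2 : ℝ) : Quaternion ℝ) * cq ((starRingEnd ℂ) η) +
     ((2 * η.im : ℝ) : Quaternion ℝ) *
       (cq (f2 n q ((starRingEnd ℂ) η) * (starRingEnd ℂ) (f1 n q ((starRingEnd ℂ) η))) * qk))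

/-!
Put `A = f₁(conj η)`, `B = f₂(conj η)` and `s = conj A - B j`, so that `|s|² = |A|² + |B|² = D' ≠ 0`.
A direct computation gives `ω s = s η`, hence `p(ω) s = ∑ q m s ηᵐ`. Writing `q m = t₁ + t₂ j` and
using `j z = (conj z) j`, this is `(conj A f₁(η) + conj B f₂(η)) + (A f₂(conj η) - B f₁(conj η)) j`,
whose first part is `p̃(η) = 0` and whose second part vanishes identically.
-/

open Quaternion ComplexConjugate

@[simp] lemma cq_eq_coeComplex (z : ℂ) : cq z = (z : ℍ) := rfl

@[simps] def qj : ℍ := ⟨0, 0, 1, 0⟩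

lemma qk_eq_I_mul_qj : qk = cq Complex.I * qj := by
  ext <;> simp [qk]

lemma cq_pow (z : ℂ) (m : ℕ) : cq (z ^ m) = cq z ^ m := map_pow ofComplex z m

lemma cq_sum (s : Finset ℕ) (f : ℕ → ℂ) : cq (∑ i ∈ s, f i) = ∑ i ∈ s, cq (f i) :=
  map_sum ofComplex f s

lemma conj_f1_conj (n : ℕ) (q : ℕ → ℍ) (z : ℂ) : conj (f1 n q (conj z)) = f1b n q z := by
  simp [f1, f1b]

lemma conj_f2_conj (n : ℕ) (q : ℕ → ℍ) (z : ℂ) : conj (f2 n q (conj z)) = f2b n q z := by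
  simp [f2, f2b]

lemma ptilde_eq (n : ℕ) (q : ℕ → ℍ) (z : ℂ) :
    ptilde n q z = conj (f1 n q (conj z)) * f1 n q z + conj (f2 n q (conj z)) * f2 n q z := by
  rw [ptilde, conj_f1_conj, conj_f2_conj]
  ring

def intertwiner (A B : ℂ) : ℍ := cq (conj A) - cq B * qj

lemma normSq_intertwiner (A B : ℂ) : normSq (intertwiner A B) = ‖A‖ ^ 2 + ‖B‖ ^ 2 := by
  simp [intertwiner, normSq_def', Complex.sq_norm, Complex.normSq_apply]
  ring

lemma numerator_mul_intertwiner (A B η : ℂ) :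
    (((‖A‖ ^ 2 : ℝ) : ℍ) * cq η + ((‖B‖ ^ 2 : ℝ) : ℍ) * cq (conj η) +
      ((2 * η.im : ℝ) : ℍ) * (cq (B * conj A) * qk)) * intertwiner A B =
    ((‖A‖ ^ 2 + ‖B‖ ^ 2 : ℝ) : ℍ) * (intertwiner A B * cq η) := by
  ext <;> simp [intertwiner, qk_eq_I_mul_qj, Complex.sq_norm, Complex.normSq_apply] <;> ring

lemma semiconjBy_intertwiner_omega2 (n : ℕ) (q : ℕ → ℍ) (η : ℂ)
    (hD : ‖f1 n q (conj η)‖ ^ 2 + ‖f2 n q (conj η)‖ ^ 2 ≠ 0) :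
    SemiconjBy (intertwiner (f1 n q (conj η)) (f2 n q (conj η))) (cq η) (omega2 n q η) := by
  rw [SemiconjBy, omega2, mul_assoc, numerator_mul_intertwiner, ← mul_assoc, ← coe_mul,
    inv_mul_cancel₀ hD, coe_one, one_mul]

lemma mul_intertwiner_mul_cq (p : ℍ) (A B w : ℂ) :
    p * (intertwiner A B * cq w) =
      cq ((⟨p.re, p.imI⟩ * conj A + ⟨p.imJ, p.imK⟩ * conj B) * w) +
        cq ((⟨p.imJ, p.imK⟩ * A - ⟨p.re, p.imI⟩ * B) * conj w) * qj := by
  ext <;> simp [intertwiner, Complex.mul_re, Complex.mul_im] <;> ring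

lemma sum_mul_intertwiner_mul_cq_pow (n : ℕ) (q : ℕ → ℍ) (A B z : ℂ) :
    ∑ m ∈ Finset.range (n + 1), q m * (intertwiner A B * cq z ^ m) =
      cq (conj A * f1 n q z + conj B * f2 n q z) +
        cq (A * f2 n q (conj z) - B * f1 n q (conj z)) * qj := by
  simp_rw [← cq_pow, mul_intertwiner_mul_cq, Finset.sum_add_distrib, ← Finset.sum_mul, ← cq_sum,
    f1, f2, Finset.mul_sum, ← Finset.sum_add_distrib, ← Finset.sum_sub_distrib, map_pow]
  exact congrArg₂ (fun x y => cq x + cq y * qj) (Finset.sum_congr rfl fun m _ => by ring)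
    (Finset.sum_congr rfl fun m _ => by ring)

theorem omega_formula_two_gives_zero_general
    (n : ℕ) (q : ℕ → Quaternion ℝ) (η : ℂ)
    (hroot : ptilde n q η = 0)
    (hD' : ‖f1 n q ((starRingEnd ℂ) η)‖ ^ 2 +
        ‖f2 n q ((starRingEnd ℂ) η)‖ ^ 2 ≠ 0) :
    ∑ m ∈ Finset.range (n + 1), q m * (omega2 n q η) ^ m = 0 := by
  have hs : intertwiner (f1 n q (conj η)) (f2 n q (conj η)) ≠ 0 := by
    rwa [Ne, ← normSq_eq_zero, normSq_intertwiner]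
  have hω := semiconjBy_intertwiner_omega2 n q η hD'
  refine (mul_eq_zero.mp ?_).resolve_right hs
  simp_rw [Finset.sum_mul, mul_assoc, ← (hω.pow_right _).eq, sum_mul_intertwiner_mul_cq_pow,
    ← ptilde_eq, hroot, mul_comm (f1 n q (conj η)), sub_self, cq_eq_coeComplex, coeComplex_zero,
    zero_mul, add_zero]

/-- If `η` is a nonreal root of the discriminant polynomial `p̃` and
`D' = |f₁(conj η)|² + |f₂(conj η)|² ≠ 0`, then the quaternion
`ω = (1/D')·(|f₁(conj η)|²·η + |f₂(conj η)|²·(conj η) + 2·(Im η)·(f₂(conj η)·conj(f₁(conj η)))·k)`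
is a zero of the simple quaternionic polynomial `p`. -/
theorem omega_formula_two_gives_zero
    (n : ℕ) (q : ℕ → Quaternion ℝ) (h0 : q 0 = 0 ∨ q 0 = 1) (η : ℂ)
    (hη : η.im ≠ 0) (hroot : ptilde n q η = 0)
    (hD' : ‖f1 n q ((starRingEnd ℂ) η)‖ ^ 2 +
        ‖f2 n q ((starRingEnd ℂ) η)‖ ^ 2 ≠ 0) :
    ∑ m ∈ Finset.range (n + 1), q m * (omega2 n q η) ^ m = 0 :=
  omega_formula_two_gives_zero_general n q η hroot hD'
end
end
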